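/- arXiv:math/0505350 — 2 statements merged into one kernel-verified Lean document; each statement's English description precedes it below -/
import Mathlib

section
/- At every critical point (x,y) of W one has W(x,y) = 3/(xy). Consequently, if ω ∈ ℂ is a primitive cube root of unity, the set of critical values of W is exactly {3, 3ω, 3ω²}, and each of these three critical values is attained at exactly three of the nine critical points. -/
/-- The mirror superpotential of the toric surface `Y`
(the projective plane blown up at 6 points including infinitely-near points). -/
noncomputable def W (x y : ℂ) : ℂ := x ^ 2 / y + y ^ 2 / x + 1 / (x * y)

/-- At every critical point `(x, y)` of `W` (i.e. `x³ = y³ = 1`) one has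
`W(x, y) = 3/(xy)`.  Consequently, for a primitive cube root of unity `ω`,
the set of critical values of `W` is exactly `{3, 3ω, 3ω²}`, and each of
these three critical values is attained at exactly three of the nine
critical points. -/
theorem critical_values_of_mirror_superpotential
    (ω : ℂ) (hω : ω ^ 3 = 1) (hω1 : ω ≠ 1) :
    (∀ x y : ℂ, x ^ 3 = 1 → y ^ 3 = 1 → W x y = 3 / (x * y)) ∧
    {w : ℂ | ∃ x y : ℂ, x ^ 3 = 1 ∧ y ^ 3 = 1 ∧ W x y = w} =
      {3, 3 * ω, 3 * ω ^ 2} ∧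
    (∀ w ∈ ({3, 3 * ω, 3 * ω ^ 2} : Set ℂ),
      Set.ncard {p : ℂ × ℂ | p.1 ^ 3 = 1 ∧ p.2 ^ 3 = 1 ∧ W p.1 p.2 = w} = 3) := by
  have hω0 : ω ≠ 0 := by
    intro h; rw [h] at hω; norm_num at hω
  have hsum : ω ^ 2 + ω + 1 = 0 := by
    have h : (ω - 1) * (ω ^ 2 + ω + 1) = 0 := by linear_combination hω
    rcases mul_eq_zero.1 h with h1 | h2
    · exact absurd (by linear_combination h1) hω1
    · exact h2
  have hωsq3 : (ω ^ 2) ^ 3 = 1 := by linear_combination (ω ^ 3 + 1) * hω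
  have hne12 : ω ≠ ω ^ 2 := by
    intro h
    exact hω1 (mul_left_cancel₀ hω0 (by linear_combination -h))
  have hne02 : (1 : ℂ) ≠ ω ^ 2 := by
    intro h
    exact hω1 (by linear_combination hω + ω * h)
  have hcube : ∀ x : ℂ, x ^ 3 = 1 ↔ (x = 1 ∨ x = ω ∨ x = ω ^ 2) := by
    intro x
    constructor
    · intro hx
      have h : (x - 1) * ((x - ω) * (x - ω ^ 2)) = 0 := by
        linear_combination hx + (x - x ^ 2) * hsum + (x - 1) * hω
      rcases mul_eq_zero.1 h with h1 | h2
      · exact Or.inl (by linear_combination h1)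
      · rcases mul_eq_zero.1 h2 with h3 | h4
        · exact Or.inr (Or.inl (by linear_combination h3))
        · exact Or.inr (Or.inr (by linear_combination h4))
    · rintro (rfl | rfl | rfl)
      · norm_num
      · exact hω
      · exact hωsq3
  have hWval : ∀ x y : ℂ, x ^ 3 = 1 → y ^ 3 = 1 → W x y = 3 / (x * y) := by
    intro x y hx hy
    have hx0 : x ≠ 0 := by intro h; rw [h] at hx; norm_num at hx
    have hy0 : y ≠ 0 := by intro h; rw [h] at hy; norm_num at hy
    rw [W]
    field_simp
    linear_combination hx + hy
  have hcard : ∀ c : ℂ, c ^ 3 = 1 →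
      Set.ncard {p : ℂ × ℂ | p.1 ^ 3 = 1 ∧ p.2 ^ 3 = 1 ∧ W p.1 p.2 = 3 / c} = 3 := by
    intro c hc
    have hc0 : c ≠ 0 := by intro h; rw [h] at hc; norm_num at hc
    have hset : {p : ℂ × ℂ | p.1 ^ 3 = 1 ∧ p.2 ^ 3 = 1 ∧ W p.1 p.2 = 3 / c} =
        (fun x => (x, c * x ^ 2)) '' {x : ℂ | x ^ 3 = 1} := by
      ext ⟨x, y⟩
      simp only [Set.mem_setOf_eq, Set.mem_image, Prod.mk.injEq]
      constructor
      · rintro ⟨hx, hy, hw⟩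
        have hx0 : x ≠ 0 := by intro h; rw [h] at hx; norm_num at hx
        have hy0 : y ≠ 0 := by intro h; rw [h] at hy; norm_num at hy
        rw [hWval x y hx hy] at hw
        have hxy : x * y = c := by
          field_simp at hw
          linear_combination -hw
        exact ⟨x, hx, rfl, by linear_combination y * hx - x ^ 2 * hxy⟩
      · rintro ⟨x', hx', rfl, rfl⟩
        have hy3 : (c * x' ^ 2) ^ 3 = 1 := by
          linear_combination x' ^ 6 * hc + (x' ^ 3 + 1) * hx'
        have hx0 : x' ≠ 0 := by intro h; rw [h] at hx'; norm_num at hx'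
        refine ⟨hx', hy3, ?_⟩
        rw [hWval x' _ hx' hy3]
        rw [div_eq_div_iff (mul_ne_zero hx0 (mul_ne_zero hc0 (pow_ne_zero 2 hx0))) hc0]
        linear_combination -3 * c * hx'
    rw [hset, Set.ncard_image_of_injOn (fun a _ b _ h => congrArg Prod.fst h)]
    have h3set : {x : ℂ | x ^ 3 = 1} = {1, ω, ω ^ 2} := by
      ext x; simpa using hcube x
    rw [h3set]
    exact Set.ncard_eq_three.mpr ⟨1, ω, ω ^ 2, hω1.symm, hne02, hne12, rfl⟩
  refine ⟨hWval, ?_, ?_⟩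
  · ext w
    simp only [Set.mem_setOf_eq, Set.mem_insert_iff, Set.mem_singleton_iff]
    constructor
    · rintro ⟨x, y, hx, hy, rfl⟩
      rw [hWval x y hx hy]
      have hxy : (x * y) ^ 3 = 1 := by rw [mul_pow, hx, hy, one_mul]
      rcases (hcube _).1 hxy with h | h | h
      · left; rw [h]; norm_num
      · right; right; rw [h]
        field_simp
        linear_combination -hω
      · right; left; rw [h]
        rw [div_eq_iff (pow_ne_zero 2 hω0)]
        linear_combination -3 * hω
    · rintro (rfl | rfl | rfl)
      · exact ⟨1, 1, by norm_num, by norm_num,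
          by rw [hWval 1 1 (by norm_num) (by norm_num)]; norm_num⟩
      · refine ⟨ω, ω, hω, hω, ?_⟩
        rw [hWval ω ω hω hω, div_eq_iff (by exact mul_ne_zero hω0 hω0)]
        linear_combination -3 * hω
      · refine ⟨ω, 1, hω, by norm_num, ?_⟩
        rw [hWval ω 1 hω (by norm_num), mul_one, div_eq_iff hω0]
        linear_combination -3 * hω
  · intro w hw
    rcases hw with rfl | rfl | rfl
    · simpa using hcard 1 (by norm_num)
    · have h : (3 : ℂ) / ω ^ 2 = 3 * ω := by
        rw [div_eq_iff (pow_ne_zero 2 hω0)]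
        linear_combination -3 * hω
      rw [← h]
      exact hcard (ω ^ 2) hωsq3
    · have h : (3 : ℂ) / ω = 3 * ω ^ 2 := by
        rw [div_eq_iff hω0]
        linear_combination -3 * hω
      rw [← h]
      exact hcard ω hω
end

section
/- At every critical point (x,y) of W, the determinant of the Hessian matrix (∂²W/∂x², ∂²W/∂x∂y; ∂²W/∂y∂x, ∂²W/∂y²) evaluated at (x,y) equals 27·(xy)², which is nonzero. In particular, every critical point of W is nondegenerate. -/
lemma Wsymm (s t : ℂ) : W s t = W t s := by unfold W; ring

/-- First partial derivative of `W` in the first slot. -/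
lemma hasDerivW (a : ℂ) {t : ℂ} (ht : t ≠ 0) :
    HasDerivAt (fun s => W s a) (2 * a⁻¹ * t - (a ^ 2 + a⁻¹) * (t ^ 2)⁻¹) t := by
  have h : (fun s => W s a) = fun s => a⁻¹ * s ^ 2 + (a ^ 2 + a⁻¹) * s⁻¹ := by
    funext s; unfold W; ring
  rw [h]
  have h1 := (hasDerivAt_pow 2 t).const_mul a⁻¹
  have h2 := (hasDerivAt_inv ht).const_mul (a ^ 2 + a⁻¹)
  refine (h1.add h2).congr_deriv ?_
  push_cast
  ring

lemma derivW (a : ℂ) {t : ℂ} (ht : t ≠ 0) :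
    deriv (fun s => W s a) t = 2 * a⁻¹ * t - (a ^ 2 + a⁻¹) * (t ^ 2)⁻¹ :=
  (hasDerivW a ht).deriv

/-- Second derivative in the same variable. -/
lemma hasDerivF (a : ℂ) {t : ℂ} (ht : t ≠ 0) :
    HasDerivAt (fun s => 2 * a⁻¹ * s - (a ^ 2 + a⁻¹) * (s ^ 2)⁻¹)
      (2 * a⁻¹ + (a ^ 2 + a⁻¹) * (2 * t) * ((t ^ 2) ^ 2)⁻¹) t := by
  have h1 := (hasDerivAt_id t).const_mul (2 * a⁻¹)
  have h2 := ((hasDerivAt_pow 2 t).inv (pow_ne_zero 2 ht)).const_mul (a ^ 2 + a⁻¹)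
  refine (h1.sub h2).congr_deriv ?_
  push_cast
  field_simp
  ring

/-- Mixed second derivative. -/
lemma hasDerivG (c : ℂ) {t : ℂ} (ht : t ≠ 0) :
    HasDerivAt (fun s => 2 * s⁻¹ * c - (s ^ 2 + s⁻¹) * (c ^ 2)⁻¹)
      (2 * c * (-(t ^ 2)⁻¹) - ((c ^ 2)⁻¹ * (2 * t) + (c ^ 2)⁻¹ * (-(t ^ 2)⁻¹))) t := by
  have hfun : (fun s : ℂ => 2 * s⁻¹ * c - (s ^ 2 + s⁻¹) * (c ^ 2)⁻¹)
      = fun s => (2 * c) * s⁻¹ - ((c ^ 2)⁻¹ * s ^ 2 + (c ^ 2)⁻¹ * s⁻¹) := by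
    funext s; ring
  rw [hfun]
  have h1 := (hasDerivAt_inv ht).const_mul (2 * c)
  have h2 := ((hasDerivAt_pow 2 t).const_mul ((c ^ 2)⁻¹)).add
    ((hasDerivAt_inv ht).const_mul ((c ^ 2)⁻¹))
  refine (h1.sub h2).congr_deriv ?_
  push_cast
  ring

/-- At every critical point `(x, y)` of `W` (i.e. `x³ = y³ = 1`), the determinant
of the Hessian matrix of second partial derivatives of `W` at `(x, y)` equals
`27·(xy)²`, which is nonzero.  In particular, every critical point of `W` is
nondegenerate. -/
theorem hessian_determinant_at_critical_points
    (x y : ℂ) (hx : x ^ 3 = 1) (hy : y ^ 3 = 1) :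
    deriv (fun t => deriv (fun s => W s y) t) x *
        deriv (fun t => deriv (fun s => W x s) t) y -
      deriv (fun t => deriv (fun s => W s t) x) y *
        deriv (fun t => deriv (fun s => W t s) y) x
      = 27 * (x * y) ^ 2 ∧
    (27 : ℂ) * (x * y) ^ 2 ≠ 0 := by
  have hx0 : x ≠ 0 := by intro h; rw [h] at hx; simp at hx
  have hy0 : y ≠ 0 := by intro h; rw [h] at hy; simp at hy
  -- the four second partial derivatives
  have e1 : deriv (fun t => deriv (fun s => W s y) t) x
      = 2 * y⁻¹ + (y ^ 2 + y⁻¹) * (2 * x) * ((x ^ 2) ^ 2)⁻¹ := by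
    have hev : (fun t => deriv (fun s => W s y) t)
        =ᶠ[nhds x] fun t => 2 * y⁻¹ * t - (y ^ 2 + y⁻¹) * (t ^ 2)⁻¹ := by
      filter_upwards [eventually_ne_nhds hx0] with t ht
      exact derivW y ht
    exact hev.deriv_eq.trans (hasDerivF y hx0).deriv
  have e2 : deriv (fun t => deriv (fun s => W x s) t) y
      = 2 * x⁻¹ + (x ^ 2 + x⁻¹) * (2 * y) * ((y ^ 2) ^ 2)⁻¹ := by
    have hsw : (fun s => W x s) = fun s => W s x := funext fun s => Wsymm x s
    rw [hsw]
    have hev : (fun t => deriv (fun s => W s x) t)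
        =ᶠ[nhds y] fun t => 2 * x⁻¹ * t - (x ^ 2 + x⁻¹) * (t ^ 2)⁻¹ := by
      filter_upwards [eventually_ne_nhds hy0] with t ht
      exact derivW x ht
    exact hev.deriv_eq.trans (hasDerivF x hy0).deriv
  have e3 : deriv (fun t => deriv (fun s => W s t) x) y
      = 2 * x * (-(y ^ 2)⁻¹) - ((x ^ 2)⁻¹ * (2 * y) + (x ^ 2)⁻¹ * (-(y ^ 2)⁻¹)) := by
    have hev : (fun t => deriv (fun s => W s t) x)
        =ᶠ[nhds y] fun t => 2 * t⁻¹ * x - (t ^ 2 + t⁻¹) * (x ^ 2)⁻¹ := by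
      filter_upwards [eventually_ne_nhds hy0] with t ht
      exact derivW t hx0
    exact hev.deriv_eq.trans (hasDerivG x hy0).deriv
  have e4 : deriv (fun t => deriv (fun s => W t s) y) x
      = 2 * y * (-(x ^ 2)⁻¹) - ((y ^ 2)⁻¹ * (2 * x) + (y ^ 2)⁻¹ * (-(x ^ 2)⁻¹)) := by
    have hev : (fun t => deriv (fun s => W t s) y)
        =ᶠ[nhds x] fun t => 2 * t⁻¹ * y - (t ^ 2 + t⁻¹) * (y ^ 2)⁻¹ := by
      filter_upwards [eventually_ne_nhds hx0] with t ht
      have hsw : (fun s => W t s) = fun s => W s t := funext fun s => Wsymm t s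
      rw [hsw]
      exact derivW t hy0
    exact hev.deriv_eq.trans (hasDerivG y hx0).deriv
  -- replace the inverses using x³ = y³ = 1
  have ix : x⁻¹ = x ^ 2 := inv_eq_of_mul_eq_one_left (by linear_combination hx)
  have i2x : (x ^ 2)⁻¹ = x := inv_eq_of_mul_eq_one_left (by linear_combination hx)
  have i4x : ((x ^ 2) ^ 2)⁻¹ = x ^ 2 :=
    inv_eq_of_mul_eq_one_left (by linear_combination (x ^ 3 + 1) * hx)
  have iy : y⁻¹ = y ^ 2 := inv_eq_of_mul_eq_one_left (by linear_combination hy)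
  have i2y : (y ^ 2)⁻¹ = y := inv_eq_of_mul_eq_one_left (by linear_combination hy)
  have i4y : ((y ^ 2) ^ 2)⁻¹ = y ^ 2 :=
    inv_eq_of_mul_eq_one_left (by linear_combination (y ^ 3 + 1) * hy)
  rw [e1, e2, e3, e4, ix, i2x, i4x, iy, i2y, i4y]
  constructor
  · linear_combination (4 * x ^ 2 * y ^ 2 * (6 + 4 * (y ^ 3 - 1))) * hx +
      24 * x ^ 2 * y ^ 2 * hy
  · exact mul_ne_zero (by norm_num) (pow_ne_zero _ (mul_ne_zero hx0 hy0))
end
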